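/- Let R be a semiartinian von Neumann regular ring with primitive factors artinian, of countable Loewy length, such that each intermediate layer S_{α+1}/S_α (0 < α < σ) is a countably generated module. Then R is right (and left) hereditary, i.e., every right ideal of R is projective. -/

import Mathlib

universe u

open Submodule

/-- The socle of a module: the supremum of all simple submodules. -/
noncomputable def socle (R : Type u) [Ring R] (M : Type u) [AddCommGroup M] [Module R M] :
    Submodule R M :=
  sSup {S : Submodule R M | IsAtom S}

/-- The Loewy (socle) sequence of a module, defined by transfinite recursion:
`loewy R M 0 = ⊥`, `loewy R M (α+1) / loewy R M α = Soc (M ⧸ loewy R M α)`, and unions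
at limit ordinals. -/
noncomputable def loewy (R : Type u) [Ring R] (M : Type u) [AddCommGroup M] [Module R M]
    (o : Ordinal.{u}) : Submodule R M :=
  o.limitRecOn ⊥ (fun _ N => (socle R (M ⧸ N)).comap N.mkQ)
    (fun o _ IH => ⨆ (b : Ordinal) (h : b < o), IH b h)

/-- The Loewy length of a module: the least ordinal `o` with `loewy R M o = ⊤`. -/
noncomputable def loewyLength (R : Type u) [Ring R] (M : Type u) [AddCommGroup M]
    [Module R M] : Ordinal.{u} :=
  sInf {o : Ordinal | loewy R M o = ⊤}

/-- A ring is semiartinian if every nonzero module has a nonzero socle. -/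
def IsSemiartinianRing (R : Type u) [Ring R] : Prop :=
  ∀ (M : Type u) [AddCommGroup M] [Module R M], Nontrivial M → socle R M ≠ ⊥

/-- A ring is von Neumann regular if for every `r` there is `s` with `r * s * r = r`. -/
def IsVonNeumannRegularRing (R : Type u) [Ring R] : Prop :=
  ∀ r : R, ∃ s : R, r * s * r = r

/-- `R` has primitive factors artinian: for every primitive ideal `P` (= annihilator of a
simple module), the factor `R/P` is artinian. -/
def HasPrimitiveFactorsArtinian (R : Type u) [Ring R] : Prop :=
  ∀ (M : Type u) [AddCommGroup M] [Module R M], IsSimpleModule R M →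
    IsArtinian R (R ⧸ (Module.annihilator R M : Submodule R R))

/-- The `α`-th layer of the Loewy sequence of `R`, as a submodule of `R ⧸ loewy R R α`. -/
noncomputable def loewyLayer (R : Type u) [Ring R] (α : Ordinal.{u}) :
    Submodule R (R ⧸ loewy R R α) :=
  (loewy R R (α + 1)).map (loewy R R α).mkQ

/-- The canonical projection `π_α : S_{α+1} → S_{α+1}/S_α`. -/
noncomputable def layerProj (R : Type u) [Ring R] (α : Ordinal.{u}) :
    (loewy R R (α + 1) : Submodule R R) →ₗ[R] (loewyLayer R α) :=
  LinearMap.codRestrict _ ((loewy R R α).mkQ.comp (loewy R R (α + 1)).subtype)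
    (fun x => ⟨(x : R), x.2, rfl⟩)

/-- `M` is weakly `R`-projective: every homomorphism from `M` to a layer `S_{α+1}/S_α`
(`0 < α`) with finitely generated image factors through `π_α : S_{α+1} → S_{α+1}/S_α`. -/
def IsWeaklyRProjective (R : Type u) [Ring R] (M : Type u) [AddCommGroup M]
    [Module R M] : Prop :=
  ∀ α : Ordinal.{u}, 0 < α →
    ∀ φ : M →ₗ[R] (loewyLayer R α), (LinearMap.range φ).FG →
      ∃ ψ : M →ₗ[R] (loewy R R (α + 1) : Submodule R R), (layerProj R α).comp ψ = φ

/-- `M` is layer projective: for each `0 < α`, every simple submodule of the `α`-th layer of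
`M` is isomorphic to a simple (direct summand) submodule of the `α`-th layer of `R`, i.e. the
`α`-th layer of `M` is a projective `R/S_α`-module. -/
def IsLayerProjective (R : Type u) [Ring R] (M : Type u) [AddCommGroup M]
    [Module R M] : Prop :=
  ∀ α : Ordinal.{u}, 0 < α →
    ∀ T : Submodule R ((loewy R M (α + 1)).map (loewy R M α).mkQ), IsAtom T →
      ∃ T' : Submodule R (loewyLayer R α), IsAtom T' ∧ Nonempty (T ≃ₗ[R] T')

/-- The submodule `M·S` of `M`, generated by all products `s • m` with `s ∈ S`. -/
def smulSub (R : Type u) [Ring R] (M : Type u) [AddCommGroup M] [Module R M]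
    (S : Submodule R R) : Submodule R M :=
  Submodule.span R {x : M | ∃ s ∈ S, ∃ m : M, s • m = x}


/-!
Write `S_α` for the Loewy sequence of `R`. For a left ideal `I`, the image of `I ∩ S_{γ+1}` in
`S_{γ+1}/S_γ` is a submodule of a countably generated semisimple module, hence countably
generated; since there are countably many layers and the sequence is continuous at limits,
`I = (I ∩ S_1) + C` with `C` countably generated.

In a von Neumann regular ring, for idempotent `e` we have `R e + R x = R h` with `h` idempotent
and `e h = h e = e`, so a countably generated left ideal is the union of a chain
`R e₀ ⊆ R e₁ ⊆ ⋯` of such idempotents, i.e. the direct sum of the `R (e_{n+1} - e_n)`, and is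
projective. The semisimple ideal `I ∩ S_1` is a direct sum of cyclic, hence projective, left
ideals, and `I` is the direct sum of `C` and a complement of `C ∩ S_1` in `I ∩ S_1`.
-/

section Loewy

variable {R : Type u} [Ring R] {M : Type u} [AddCommGroup M] [Module R M]

theorem loewy_zero : loewy R M 0 = ⊥ :=
  Ordinal.limitRecOn_zero ..

theorem loewy_succ (o : Ordinal.{u}) :
    loewy R M (o + 1) = (socle R (M ⧸ loewy R M o)).comap (loewy R M o).mkQ :=
  Ordinal.limitRecOn_add_one ..

theorem loewy_limit {o : Ordinal.{u}} (h : Order.IsSuccLimit o) :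
    loewy R M o = ⨆ (b : Ordinal) (_ : b < o), loewy R M b :=
  Ordinal.limitRecOn_limit _ _ _ _ h

theorem loewy_le_succ (o : Ordinal.{u}) : loewy R M o ≤ loewy R M (o + 1) := by
  rw [loewy_succ]
  exact (ker_mkQ _).ge.trans (LinearMap.ker_le_comap _)

theorem loewy_mono : Monotone (loewy R M) := by
  intro a b hab
  induction b using Ordinal.limitRecOn with
  | zero => rw [nonpos_iff_eq_zero.mp hab]
  | add_one b ih =>
    rcases hab.lt_or_eq with hlt | rfl
    · exact (ih (Order.lt_add_one_iff.mp hlt)).trans (loewy_le_succ b)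
    · exact le_rfl
  | limit b hb _ =>
    rcases hab.lt_or_eq with hlt | rfl
    · rw [loewy_limit hb]
      exact le_iSup₂_of_le a hlt le_rfl
    · exact le_rfl

theorem exists_lt_mem_loewy_of_isSuccLimit {β : Ordinal.{u}} (hβ : Order.IsSuccLimit β) {x : M}
    (hx : x ∈ loewy R M β) : ∃ γ < β, x ∈ loewy R M γ := by
  rw [loewy_limit hβ, iSup_subtype'] at hx
  have : Nonempty {γ // γ < β} := ⟨⟨0, hβ.bot_lt⟩⟩
  obtain ⟨⟨γ, hγ⟩, hxγ⟩ :=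
    (mem_iSup_of_directed _ (loewy_mono.comp (Subtype.mono_coe _)).directed_le).mp hx
  exact ⟨γ, hγ, hxγ⟩

instance isSemisimpleModule_socle (N : Type u) [AddCommGroup N] [Module R N] :
    IsSemisimpleModule R (socle R N) := by
  rw [socle, sSup_eq_iSup]
  refine isSemisimpleModule_biSup_of_isSemisimpleModule_submodule fun T hT => ?_
  have := isSimpleModule_iff_isAtom.mpr hT
  infer_instance

theorem isSemisimpleModule_loewy_one : IsSemisimpleModule R (loewy R M 1) := by
  have hinj : Function.Injective (loewy R M 0).mkQ := by
    rw [← LinearMap.ker_eq_bot, ker_mkQ, loewy_zero]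
  rw [show (1 : Ordinal.{u}) = 0 + 1 from (zero_add 1).symm, loewy_succ]
  exact (comap_equiv_self_of_inj_of_le hinj (le_top.trans (range_mkQ _).ge)).symm
    |>.isSemisimpleModule_iff.mp inferInstance

theorem loewyLayer_eq_socle (α : Ordinal.{u}) :
    loewyLayer R α = socle R (R ⧸ loewy R R α) := by
  rw [loewyLayer, loewy_succ, map_comap_eq, range_mkQ, top_inf_eq]

instance isSemisimpleModule_loewyLayer (α : Ordinal.{u}) :
    IsSemisimpleModule R (loewyLayer R α) := by
  rw [loewyLayer_eq_socle]
  infer_instance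

end Loewy

namespace Submodule

section Semiring

variable {R M N : Type*} [Semiring R] [AddCommMonoid M] [Module R M] [AddCommMonoid N]
  [Module R N] {p q : Submodule R M}

def CG (p : Submodule R M) : Prop :=
  ∃ s : Set M, s.Countable ∧ span R s = p

theorem FG.cg (hp : p.FG) : p.CG :=
  let ⟨s, hs⟩ := hp
  ⟨s, s.countable_toSet, hs⟩

theorem cg_bot : (⊥ : Submodule R M).CG :=
  ⟨∅, Set.countable_empty, span_empty⟩

theorem CG.sup (hp : p.CG) (hq : q.CG) : (p ⊔ q).CG := by
  obtain ⟨s, hs, rfl⟩ := hp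
  obtain ⟨t, ht, rfl⟩ := hq
  exact ⟨s ∪ t, hs.union ht, span_union s t⟩

theorem cg_iSup {ι : Sort*} [Countable ι] {p : ι → Submodule R M} (h : ∀ i, (p i).CG) :
    (⨆ i, p i).CG := by
  choose s hs hsp using h
  exact ⟨⋃ i, s i, Set.countable_iUnion hs, by simp_rw [span_iUnion, hsp]⟩

theorem CG.map (f : M →ₗ[R] N) (hp : p.CG) : (p.map f).CG := by
  obtain ⟨s, hs, rfl⟩ := hp
  exact ⟨f '' s, hs.image f, span_image f⟩

theorem cg_top : (⊤ : Submodule R p).CG ↔ p.CG := by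
  refine ⟨fun h => by simpa using h.map p.subtype, ?_⟩
  rintro ⟨s, hs, rfl⟩
  exact ⟨Subtype.val ⁻¹' s, hs.preimage Subtype.val_injective, span_span_coe_preimage⟩

theorem CG.exists_span_range_eq (hp : p.CG) : ∃ g : ℕ → M, span R (Set.range g) = p := by
  obtain ⟨s, hs, rfl⟩ := hp
  obtain ⟨g, hg⟩ := (hs.insert 0).exists_eq_range (Set.insert_nonempty 0 s)
  exact ⟨g, by rw [← hg, span_insert_zero]⟩

end Semiring

variable {R M N : Type*} [Ring R] [AddCommGroup M] [Module R M] [AddCommGroup N] [Module R N]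
  {p q : Submodule R M}

theorem exists_cg_le_sup_ker_inf_of_cg_map (f : M →ₗ[R] N) (hp : (p.map f).CG) :
    ∃ c ≤ p, c.CG ∧ p ≤ c ⊔ LinearMap.ker f ⊓ p := by
  obtain ⟨s, hs, hsp⟩ := hp
  have hlift (y : s) : ∃ x ∈ p, f x = y := mem_map.mp (hsp ▸ subset_span y.2)
  choose x hxp hfx using hlift
  have : Countable s := hs.to_subtype
  have hc : span R (Set.range x) ≤ p := span_le.mpr (Set.range_subset_iff.mpr hxp)
  refine ⟨span R (Set.range x), hc, ⟨_, Set.countable_range x, rfl⟩, ?_⟩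
  have hmap : (span R (Set.range x)).map f = p.map f := by
    rw [map_span, ← Set.range_comp, show f ∘ x = Subtype.val from funext hfx, Subtype.range_coe,
      hsp]
  have hle : p ≤ span R (Set.range x) ⊔ LinearMap.ker f := by
    rw [← comap_map_eq, hmap]
    exact le_comap_map f p
  calc p ≤ (span R (Set.range x) ⊔ LinearMap.ker f) ⊓ p := le_inf hle le_rfl
    _ = span R (Set.range x) ⊔ LinearMap.ker f ⊓ p := sup_inf_assoc_of_le _ hc

theorem cg_of_cg_top [IsSemisimpleModule R M] (h : (⊤ : Submodule R M).CG) (p : Submodule R M) :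
    p.CG := by
  obtain ⟨q, hpq⟩ := ComplementedLattice.exists_isCompl p
  have := h.map (p.projectionOnto q hpq)
  rwa [map_top, range_projectionOnto, cg_top] at this

theorem CG.of_le_of_isSemisimpleModule [IsSemisimpleModule R q] (hq : q.CG) (hpq : p ≤ q) :
    p.CG := by
  have := (cg_of_cg_top (cg_top.mpr hq) (p.comap q.subtype)).map q.subtype
  rwa [map_comap_subtype, inf_eq_right.mpr hpq] at this

end Submodule

section Projective

variable {R M : Type*} [Ring R] [AddCommGroup M] [Module R M]

theorem Module.projective_of_isSemisimpleModule [IsSemisimpleModule R M]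
    (h : ∀ m : Submodule R M, IsSimpleModule R m → Module.Projective R m) :
    Module.Projective R M := by
  obtain ⟨s, e, -, hs⟩ := IsSemisimpleModule.exists_linearEquiv_dfinsupp R M
  have (m : s) : Module.Projective R m.1 := h m (hs m)
  exact .of_equiv e.symm

theorem Submodule.projective_of_isCompl [Module.Projective R M] {p q : Submodule R M}
    (h : IsCompl p q) : Module.Projective R p :=
  .of_split p.subtype (p.projectionOnto q h) (p.projectionOnto_comp_subtype h)

theorem Submodule.projective_sup_of_disjoint {p q : Submodule R M} [Module.Projective R p]
    [Module.Projective R q] (h : Disjoint p q) : Module.Projective R ↥(p ⊔ q) := by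
  have hinj : Function.Injective (p.subtype.coprod q.subtype) := by
    rw [← LinearMap.ker_eq_bot, LinearMap.ker_coprod_of_disjoint_range _ _ (by simpa using h),
      ker_subtype, ker_subtype, prod_bot]
  have hrange : LinearMap.range (p.subtype.coprod q.subtype) = p ⊔ q := by
    rw [LinearMap.range_coprod, range_subtype, range_subtype]
  exact .of_equiv ((LinearEquiv.ofInjective _ hinj).trans (LinearEquiv.ofEq _ _ hrange))

theorem Submodule.projective_sup_of_isSemisimpleModule {p q : Submodule R M}
    [IsSemisimpleModule R p] [Module.Projective R p] [Module.Projective R q] :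
    Module.Projective R ↥(p ⊔ q) := by
  obtain ⟨p', hp'⟩ := ComplementedLattice.exists_isCompl (q.comap p.subtype)
  have : Module.Projective R (p'.map p.subtype) :=
    have := projective_of_isCompl hp'.symm
    .of_equiv (p'.equivMapOfInjective _ (injective_subtype p))
  have hdisj : Disjoint (p'.map p.subtype) q := by
    rw [disjoint_def]
    rintro _ ⟨y, hy, rfl⟩ hyq
    simpa using hp'.disjoint.le_bot ⟨hyq, hy⟩
  have hsup : p'.map p.subtype ⊔ q = p ⊔ q := by
    refine le_antisymm (sup_le_sup_right (map_subtype_le p p') q) (sup_le ?_ le_sup_right)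
    calc p = (q.comap p.subtype ⊔ p').map p.subtype := by rw [hp'.sup_eq_top, map_subtype_top]
      _ ≤ q ⊔ p'.map p.subtype := by rw [map_sup]; exact sup_le_sup_right (map_comap_le _ _) _
      _ = p'.map p.subtype ⊔ q := sup_comm _ _
  exact hsup ▸ projective_sup_of_disjoint hdisj

end Projective

section VonNeumannRegular

variable {R : Type*} [Ring R]

theorem IsIdempotentElem.mem_span_singleton_iff {e : R} (he : IsIdempotentElem e) {x : R} :
    x ∈ span R {e} ↔ x * e = x := by
  refine ⟨fun hx => ?_, fun hx => mem_span_singleton.mpr ⟨x, hx⟩⟩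
  obtain ⟨r, rfl⟩ := mem_span_singleton.mp hx
  rw [smul_eq_mul, mul_assoc, he.eq]

/-- The ideal is the direct sum of the `R (e (n + 1) - e n)`: with `f n = e (n + 1) - e n`,
`x ↦ (x * f n)ₙ` is a section of `(ℕ →₀ R) → C, δₙ ↦ f n`. -/
theorem projective_iSup_span_singleton_of_chain {e : ℕ → R} (he : ∀ n, IsIdempotentElem (e n))
    (h0 : e 0 = 0) (hle : ∀ n, e n * e (n + 1) = e n) (hge : ∀ n, e (n + 1) * e n = e n) :
    Module.Projective R ↥(⨆ n, span R {e n}) := by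
  set C := ⨆ n, span R {e n}
  have hmono : Monotone fun n => span R {e n} := monotone_nat_of_le_succ fun n =>
    (span_singleton_le_iff_mem _ _).mpr ((he _).mem_span_singleton_iff.mpr (hle n))
  have hev : ∀ x ∈ C, ∃ N, ∀ n ≥ N, x * e n = x := by
    intro x hx
    obtain ⟨N, hN⟩ := (mem_iSup_of_directed _ hmono.directed_le).mp hx
    exact ⟨N, fun n hn => (he n).mem_span_singleton_iff.mp (hmono hn hN)⟩
  set f : ℕ → R := fun n => e (n + 1) - e n
  have hfC (n : ℕ) : f n ∈ C :=
    sub_mem (mem_iSup_of_mem (n + 1) (mem_span_singleton_self _))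
      (mem_iSup_of_mem n (mem_span_singleton_self _))
  have hff (n : ℕ) : f n * f n = f n := by
    simp only [f, mul_sub, sub_mul, (he _).eq, hle, hge]
    abel
  have hf0 {x : R} {N : ℕ} (hN : ∀ n ≥ N, x * e n = x) {n : ℕ} (hn : N ≤ n) : x * f n = 0 := by
    rw [mul_sub, hN n hn, hN (n + 1) (by omega), sub_self]
  have hfin (x : C) : (Function.support fun n => (x : R) * f n).Finite := by
    obtain ⟨N, hN⟩ := hev x x.2
    exact (Set.finite_Iio N).subset fun n hn => not_le.mp fun h => hn (hf0 hN h)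
  let s : C →ₗ[R] ℕ →₀ R :=
    { toFun := fun x => Finsupp.ofSupportFinite _ (hfin x)
      map_add' := fun x y => by ext n; simp [Finsupp.ofSupportFinite_coe, add_mul]
      map_smul' := fun r x => by ext n; simp [Finsupp.ofSupportFinite_coe, mul_assoc] }
  refine .of_split s (Finsupp.linearCombination R fun n => (⟨f n, hfC n⟩ : C)) ?_
  ext ⟨x, hx⟩
  obtain ⟨N, hN⟩ := hev x hx
  have hsupp : (s ⟨x, hx⟩).support ⊆ Finset.range N := fun n hn =>
    Finset.mem_range.mpr (not_le.mp fun h => Finsupp.mem_support_iff.mp hn (hf0 hN h))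
  rw [LinearMap.comp_apply, LinearMap.id_apply, Finsupp.linearCombination_apply,
    Finsupp.sum_of_support_subset _ hsupp (fun n a => a • (⟨f n, hfC n⟩ : C))
      (fun _ _ => zero_smul R _),
    AddSubmonoidClass.coe_finsetSum]
  calc ∑ n ∈ Finset.range N, ((s ⟨x, hx⟩ n • ⟨f n, hfC n⟩ : C) : R)
        = ∑ n ∈ Finset.range N, (x * e (n + 1) - x * e n) :=
      Finset.sum_congr rfl fun n _ =>
        show x * f n * f n = _ by rw [mul_assoc, hff, mul_sub]
    _ = x := by rw [Finset.sum_range_sub (fun n => x * e n), hN N le_rfl, h0, mul_zero, sub_zero]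

namespace IsVonNeumannRegularRing

theorem exists_isIdempotentElem_span_eq (hvnr : IsVonNeumannRegularRing R) (a : R) :
    ∃ e : R, IsIdempotentElem e ∧ span R {e} = span R {a} := by
  obtain ⟨s, hs⟩ := hvnr a
  refine ⟨s * a, by rw [IsIdempotentElem, mul_assoc, ← mul_assoc a, hs], le_antisymm ?_ ?_⟩
  · exact (span_singleton_le_iff_mem _ _).mpr (mem_span_singleton.mpr ⟨s, rfl⟩)
  · exact (span_singleton_le_iff_mem _ _).mpr
      (mem_span_singleton.mpr ⟨a, by rw [smul_eq_mul, ← mul_assoc, hs]⟩)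

/-- The generator is `e + g - e * g`, where `g` is an idempotent generator of `R (x - x * e)`. -/
theorem exists_isIdempotentElem_span_eq_sup (hvnr : IsVonNeumannRegularRing R) {e : R}
    (he : IsIdempotentElem e) (x : R) :
    ∃ h : R, IsIdempotentElem h ∧ span R {h} = span R {e} ⊔ span R {x} ∧ e * h = e ∧
      h * e = e := by
  obtain ⟨g, hg, hgx⟩ := hvnr.exists_isIdempotentElem_span_eq (x - x * e)
  have hg_mem : g ∈ span R {x - x * e} := hgx ▸ mem_span_singleton_self g
  have hge : g * e = 0 := by
    obtain ⟨r, hr⟩ := mem_span_singleton.mp hg_mem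
    rw [← hr, smul_eq_mul, mul_assoc, sub_mul, mul_assoc, he.eq, sub_self, mul_zero]
  have hxg : (x - x * e) * g = x - x * e :=
    hg.mem_span_singleton_iff.mp (hgx ▸ mem_span_singleton_self _)
  have heh : e * (e + g - e * g) = e := by
    rw [mul_sub, mul_add, he.eq, ← mul_assoc, he.eq, add_sub_cancel_right]
  have hhe : (e + g - e * g) * e = e := by
    rw [sub_mul, add_mul, he.eq, hge, mul_assoc, hge, mul_zero, add_zero, sub_zero]
  have hgh : g * (e + g - e * g) = g := by
    rw [mul_sub, mul_add, hg.eq, ← mul_assoc, hge, zero_mul, zero_add, sub_zero]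
  have hxh : x * (e + g - e * g) = x := by
    calc x * (e + g - e * g) = x * e + (x - x * e) * g := by noncomm_ring
      _ = x := by rw [hxg, add_sub_cancel]
  have hidem : IsIdempotentElem (e + g - e * g) := by
    rw [IsIdempotentElem, sub_mul, add_mul, heh, hgh, mul_assoc, hgh]
  have hx_sub : span R {x - x * e} ≤ span R {e} ⊔ span R {x} :=
    (span_singleton_le_iff_mem _ _).mpr (sub_mem (mem_sup_right (mem_span_singleton_self x))
      (mem_sup_left (smul_mem _ x (mem_span_singleton_self e))))
  refine ⟨_, hidem, le_antisymm ?_ ?_, heh, hhe⟩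
  · refine (span_singleton_le_iff_mem _ _).mpr (sub_mem (add_mem ?_ (hx_sub hg_mem)) ?_)
    · exact mem_sup_left (mem_span_singleton_self e)
    · exact smul_mem _ e (hx_sub hg_mem)
  · simp only [sup_le_iff, span_singleton_le_iff_mem, hidem.mem_span_singleton_iff]
    exact ⟨heh, hxh⟩

theorem exists_isIdempotentElem_chain (hvnr : IsVonNeumannRegularRing R) (g : ℕ → R) :
    ∃ e : ℕ → R, e 0 = 0 ∧ ∀ n, IsIdempotentElem (e n) ∧
      span R {e (n + 1)} = span R {e n} ⊔ span R {g n} ∧ e n * e (n + 1) = e n ∧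
        e (n + 1) * e n = e n := by
  choose next hnext using fun (a : {e : R // IsIdempotentElem e}) n =>
    hvnr.exists_isIdempotentElem_span_eq_sup a.2 (g n)
  let E : ℕ → {e : R // IsIdempotentElem e} :=
    fun n => Nat.rec ⟨0, .zero⟩ (fun n a => ⟨next a n, (hnext a n).1⟩) n
  exact ⟨fun n => (E n).1, rfl, fun n => ⟨(E n).2, (hnext (E n) n).2⟩⟩

theorem projective_of_cg (hvnr : IsVonNeumannRegularRing R) {C : Submodule R R} (hC : C.CG) :
    Module.Projective R C := by
  obtain ⟨g, rfl⟩ := hC.exists_span_range_eq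
  obtain ⟨e, h0, he⟩ := hvnr.exists_isIdempotentElem_chain g
  have hspan : ⨆ n, span R {e n} = span R (Set.range g) := by
    rw [span_range_eq_iSup]
    refine le_antisymm (iSup_le fun n => ?_) (iSup_le fun n => ?_)
    · induction n with
      | zero => simp [h0]
      | succ n ih => rw [(he n).2.1]; exact sup_le ih (le_iSup (fun i => span R {g i}) n)
    · exact ((he n).2.1 ▸ le_sup_right).trans (le_iSup (fun i => span R {e i}) (n + 1))
  rw [← hspan]
  exact projective_iSup_span_singleton_of_chain (fun n => (he n).1) h0 (fun n => (he n).2.2.1)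
    (fun n => (he n).2.2.2)

theorem projective_of_isSemisimpleModule (hvnr : IsVonNeumannRegularRing R) (A : Submodule R R)
    [IsSemisimpleModule R A] : Module.Projective R A :=
  Module.projective_of_isSemisimpleModule fun m _ =>
    have := hvnr.projective_of_cg ((Module.Finite.iff_fg.mp inferInstance : m.FG).cg.map A.subtype)
    .of_equiv (m.equivMapOfInjective _ (injective_subtype A)).symm

end IsVonNeumannRegularRing

end VonNeumannRegular

theorem Ordinal.countable_Iio_of_card_le_aleph0 {β : Ordinal} (hβ : β.card ≤ Cardinal.aleph0) :
    (Set.Iio β).Countable := by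
  rw [← Cardinal.le_aleph0_iff_set_countable, Cardinal.mk_Iio_ordinal, Cardinal.lift_le_aleph0]
  exact hβ

theorem Submodule.exists_cg_le_sup_of_filtration {R M : Type*} [Ring R] [AddCommGroup M]
    [Module R M] {F : Ordinal → Submodule R M} (hmono : Monotone F)
    (hlim : ∀ β, Order.IsSuccLimit β → ∀ x ∈ F β, ∃ γ < β, x ∈ F γ) {a β : Ordinal}
    (hβ : β.card ≤ Cardinal.aleph0)
    (hlayer : ∀ γ, a ≤ γ → γ < β → ∃ c ≤ F (γ + 1), c.CG ∧ F (γ + 1) ≤ F γ ⊔ c) :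
    ∃ c ≤ F β, c.CG ∧ F β ≤ F a ⊔ c := by
  induction β using Ordinal.limitRecOn with
  | zero => exact ⟨⊥, bot_le, cg_bot, le_sup_of_le_left (hmono zero_le)⟩
  | add_one γ ih =>
    rcases lt_or_ge γ a with hγa | haγ
    · exact ⟨⊥, bot_le, cg_bot, le_sup_of_le_left (hmono (Order.add_one_le_of_lt hγa))⟩
    have hγ₁ : γ < γ + 1 := Order.lt_add_one_iff.mpr le_rfl
    obtain ⟨c₀, hc₀, hc₀cg, hγ⟩ := ih ((Ordinal.card_le_card hγ₁.le).trans hβ)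
      fun δ h₁ h₂ => hlayer δ h₁ (h₂.trans hγ₁)
    obtain ⟨c₁, hc₁, hc₁cg, hstep⟩ := hlayer γ haγ hγ₁
    refine ⟨c₀ ⊔ c₁, sup_le (hc₀.trans (hmono hγ₁.le)) hc₁, hc₀cg.sup hc₁cg, ?_⟩
    calc F (γ + 1) ≤ F γ ⊔ c₁ := hstep
      _ ≤ F a ⊔ c₀ ⊔ c₁ := sup_le_sup_right hγ _
      _ = F a ⊔ (c₀ ⊔ c₁) := sup_assoc ..
  | limit β hβlim ih =>
    have := (Ordinal.countable_Iio_of_card_le_aleph0 hβ).to_subtype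
    choose c hcF hccg hc using fun γ : Set.Iio β =>
      ih γ γ.2 ((Ordinal.card_le_card γ.2.le).trans hβ) fun δ h₁ h₂ => hlayer δ h₁ (h₂.trans γ.2)
    refine ⟨⨆ γ, c γ, iSup_le fun γ => (hcF γ).trans (hmono γ.2.le), cg_iSup hccg, fun x hx => ?_⟩
    obtain ⟨γ, hγβ, hxγ⟩ := hlim β hβlim x hx
    exact sup_le_sup_left (le_iSup c ⟨γ, hγβ⟩) _ (hc ⟨γ, hγβ⟩ hxγ)

section Hereditary

variable {R : Type u} [Ring R] {σ : Ordinal.{u}}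

theorem cg_loewyLayer (hlen : loewy R R (σ + 1) = ⊤)
    (hlayers : ∀ α : Ordinal.{u}, 0 < α → α < σ →
      ∃ S : Set (loewyLayer R α), S.Countable ∧ Submodule.span R S = ⊤)
    {γ : Ordinal.{u}} (hγ : 0 < γ) (hγσ : γ ≤ σ) : (loewyLayer R γ).CG := by
  rcases hγσ.lt_or_eq with hlt | rfl
  · exact cg_top.mp (hlayers γ hγ hlt)
  · rw [loewyLayer, hlen]
    exact Module.Finite.fg_top.cg.map _

theorem exists_cg_le_sup_inf_loewy_one (hcard : σ.card ≤ Cardinal.aleph0)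
    (hlen : loewy R R (σ + 1) = ⊤)
    (hlayers : ∀ α : Ordinal.{u}, 0 < α → α < σ →
      ∃ S : Set (loewyLayer R α), S.Countable ∧ Submodule.span R S = ⊤)
    (I : Submodule R R) : ∃ c ≤ I, c.CG ∧ I ≤ I ⊓ loewy R R 1 ⊔ c := by
  have hlayer (γ : Ordinal.{u}) (h₁ : 1 ≤ γ) (h₂ : γ < σ + 1) :
      ∃ c ≤ I ⊓ loewy R R (γ + 1), c.CG ∧ I ⊓ loewy R R (γ + 1) ≤ I ⊓ loewy R R γ ⊔ c := by
    have hmap : ((I ⊓ loewy R R (γ + 1)).map (loewy R R γ).mkQ).CG :=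
      (cg_loewyLayer hlen hlayers (zero_lt_one.trans_le h₁) (Order.lt_add_one_iff.mp h₂))
        |>.of_le_of_isSemisimpleModule (map_mono inf_le_right)
    obtain ⟨c, hc, hccg, hle⟩ := exists_cg_le_sup_ker_inf_of_cg_map _ hmap
    refine ⟨c, hc, hccg, hle.trans (sup_le le_sup_right (le_sup_of_le_left ?_))⟩
    rw [ker_mkQ]
    exact le_inf (inf_le_right.trans inf_le_left) inf_le_left
  obtain ⟨c, hc, hccg, hle⟩ := exists_cg_le_sup_of_filtration
    (F := fun γ => I ⊓ loewy R R γ) (fun _ _ h => inf_le_inf_left I (loewy_mono h))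
    (fun β hβ x hx => (exists_lt_mem_loewy_of_isSuccLimit hβ hx.2).imp fun _ ⟨hγ, hxγ⟩ =>
      ⟨hγ, hx.1, hxγ⟩)
    (by rwa [Ordinal.card_add_one, Cardinal.add_le_aleph0, and_iff_left Cardinal.one_le_aleph0])
    hlayer
  simp only [hlen, inf_top_eq] at hc hle
  exact ⟨c, hc, hccg, hle⟩

end Hereditary

theorem hereditary_of_countable_layers_general
    (R : Type u) [Ring R]
    (hvnr : IsVonNeumannRegularRing R)
    (σ : Ordinal.{u}) (hcard : σ.card ≤ Cardinal.aleph0)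
    (hlen : loewy R R (σ + 1) = ⊤)
    (hlayers : ∀ α : Ordinal.{u}, 0 < α → α < σ →
      ∃ S : Set (loewyLayer R α), S.Countable ∧ Submodule.span R S = ⊤) :
    ∀ I : Submodule R R, Module.Projective R I := by
  intro I
  obtain ⟨c, hcI, hc, hIc⟩ := exists_cg_le_sup_inf_loewy_one hcard hlen hlayers I
  have : IsSemisimpleModule R ↥(loewy R R 1) := isSemisimpleModule_loewy_one
  have : IsSemisimpleModule R ↥(I ⊓ loewy R R 1) := .congr (comapSubtypeEquivOfLe inf_le_right).symm
  have := hvnr.projective_of_isSemisimpleModule (I ⊓ loewy R R 1)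
  have := hvnr.projective_of_cg hc
  rw [← le_antisymm (sup_le inf_le_left hcI) hIc]
  exact projective_sup_of_isSemisimpleModule

/-- A semiartinian von Neumann regular ring with primitive factors artinian, of countable Loewy
length, whose intermediate layers are countably generated, is hereditary: every ideal is
projective. -/
theorem hereditary_of_countable_layers
    (R : Type u) [Ring R] (hsa : IsSemiartinianRing R)
    (hvnr : IsVonNeumannRegularRing R) (hpfa : HasPrimitiveFactorsArtinian R)
    (σ : Ordinal.{u}) (hcard : σ.card ≤ Cardinal.aleph0)
    (hlen : loewy R R (σ + 1) = ⊤)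
    (hlayers : ∀ α : Ordinal.{u}, 0 < α → α < σ →
      ∃ S : Set (loewyLayer R α), S.Countable ∧ Submodule.span R S = ⊤) :
    ∀ I : Submodule R R, Module.Projective R I :=
  hereditary_of_countable_layers_general R hvnr σ hcard hlen hlayers
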